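/- arXiv:1601.01832 — 12 statements merged into one kernel-verified Lean document; each statement's English description precedes it below -/
import Mathlib

section
/- The zygotic algebra for simple Mendelian inheritance is not an evolution algebra: the 3-dimensional commutative algebra over a field of characteristic 0 with basis {AA, Aa, aa} and products AA·AA = AA, AA·Aa = (1/2)AA + (1/2)Aa, AA·aa = Aa, Aa·Aa = (1/4)AA + (1/2)Aa + (1/4)aa, Aa·aa = (1/2)Aa + (1/2)aa, aa·aa = aa admits no basis {v1, v2, v3} with vi·vj = 0 for all i ≠ j. -/
/-!
The product of the Mendelian zygotic algebra factors through the gametic output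
`g x = (p x, q x)`, the frequencies of the alleles `A` and `a` produced by `x`:
`x * y = p x p y • AA + (p x q y + q x p y) • Aa + q x q y • aa`, which is the product of the
binary linear forms `p x X + q x Y` and `p y X + q y Y`. Since `K[X, Y]` has no zero divisors,
`x * y = 0` forces `g x = 0` or `g y = 0`. For a natural basis `v` this means that `g` kills all
but at most one `v i`, so the image of `g` is at most a line; but `g` maps onto `K²`.
-/

open Module

section

variable {K : Type*} [Field K]

lemma eq_zero_or_eq_zero_of_linearForm_mul_eq_zero {a b c d : K} (h₀ : a * c = 0)
    (h₁ : a * d + b * c = 0) (h₂ : b * d = 0) : (a = 0 ∧ b = 0) ∨ (c = 0 ∧ d = 0) := by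
  by_cases ha : a = 0
  · subst ha
    by_cases hb : b = 0
    · exact .inl ⟨rfl, hb⟩
    · exact .inr ⟨by simpa [hb] using h₁, by simpa [hb] using h₂⟩
  · have hc : c = 0 := by simpa [ha] using h₀
    subst hc
    exact .inr ⟨rfl, by simpa [ha] using h₁⟩

lemma exists_range_le_span_singleton_of_basis {ι A V : Type*} [AddCommGroup A] [Module K A]
    [AddCommGroup V] [Module K V] (v : Basis ι K A) (f : A →ₗ[K] V)
    (h : ∀ i j, i ≠ j → f (v i) = 0 ∨ f (v j) = 0) : ∃ w, LinearMap.range f ≤ K ∙ w := by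
  by_cases hf : ∀ i, f (v i) = 0
  · refine ⟨0, ?_⟩
    rw [v.ext hf (f₂ := 0), LinearMap.range_zero]
    exact bot_le
  obtain ⟨a, ha⟩ := not_forall.mp hf
  refine ⟨f (v a), ?_⟩
  rw [LinearMap.range_eq_map, ← v.span_eq, Submodule.map_span, Submodule.span_le]
  rintro _ ⟨_, ⟨i, rfl⟩, rfl⟩
  rcases eq_or_ne i a with rfl | hia
  · exact Submodule.mem_span_singleton_self _
  · simp [(h i a hia).resolve_right ha]

lemma eq_zero_or_eq_zero_of_mul_eq_zero_of_gametic {A : Type*} [NonUnitalNonAssocRing A]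
    [Module K A] {w : Fin 3 → A} (hw : LinearIndependent K w) (g : A →ₗ[K] K × K)
    (hmul : ∀ x y, x * y = ((g x).1 * (g y).1) • w 0
      + ((g x).1 * (g y).2 + (g x).2 * (g y).1) • w 1 + ((g x).2 * (g y).2) • w 2)
    {x y : A} (hxy : x * y = 0) : g x = 0 ∨ g y = 0 := by
  have hcoef := Fintype.linearIndependent_iff.mp hw
    ![(g x).1 * (g y).1, (g x).1 * (g y).2 + (g x).2 * (g y).1, (g x).2 * (g y).2]
    (by simpa [Fin.sum_univ_three, ← hmul] using hxy)
  rcases eq_zero_or_eq_zero_of_linearForm_mul_eq_zero (hcoef 0) (hcoef 1) (hcoef 2) with h | h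
  · exact .inl (Prod.ext h.1 h.2)
  · exact .inr (Prod.ext h.1 h.2)

end

section

variable {K A : Type*} [Field K] [NonUnitalNonAssocCommRing A] [Module K A]

noncomputable def gameteFreq (e : Basis (Fin 3) K A) : A →ₗ[K] K × K :=
  (e.coord 0 + (2 : K)⁻¹ • e.coord 1).prod ((2 : K)⁻¹ • e.coord 1 + e.coord 2)

lemma gameteFreq_apply (e : Basis (Fin 3) K A) (x : A) :
    gameteFreq e x =
      (e.repr x 0 + (2 : K)⁻¹ * e.repr x 1, (2 : K)⁻¹ * e.repr x 1 + e.repr x 2) :=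
  rfl

lemma range_gameteFreq (e : Basis (Fin 3) K A) : LinearMap.range (gameteFreq e) = ⊤ :=
  LinearMap.range_eq_top.mpr fun ⟨s, t⟩ => ⟨s • e 0 + t • e 2, by simp [gameteFreq_apply]⟩

lemma mul_eq_of_mendel [CharZero K] [SMulCommClass K A A] [IsScalarTower K A A]
    (e : Basis (Fin 3) K A)
    (hAA : e 0 * e 0 = e 0)
    (hAAAa : e 0 * e 1 = (2 : K)⁻¹ • e 0 + (2 : K)⁻¹ • e 1)
    (hAAaa : e 0 * e 2 = e 1)
    (hAaAa : e 1 * e 1 = (4 : K)⁻¹ • e 0 + (2 : K)⁻¹ • e 1 + (4 : K)⁻¹ • e 2)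
    (hAaaa : e 1 * e 2 = (2 : K)⁻¹ • e 1 + (2 : K)⁻¹ • e 2)
    (haaaa : e 2 * e 2 = e 2) (x y : A) :
    x * y = ((gameteFreq e x).1 * (gameteFreq e y).1) • e 0
      + ((gameteFreq e x).1 * (gameteFreq e y).2 + (gameteFreq e x).2 * (gameteFreq e y).1) • e 1
      + ((gameteFreq e x).2 * (gameteFreq e y).2) • e 2 := by
  simp only [gameteFreq_apply]
  conv_lhs => rw [← e.sum_repr x, ← e.sum_repr y]
  simp only [Fin.sum_univ_three, add_mul, mul_add, smul_mul_smul_comm, mul_comm (e 1) (e 0),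
    mul_comm (e 2) (e 0), mul_comm (e 2) (e 1), hAA, hAAAa, hAAaa, hAaAa, hAaaa, haaaa]
  module

end

/-- The zygotic algebra for simple Mendelian inheritance is not an evolution algebra. -/
theorem mendel_not_evolution {K A : Type*} [Field K] [CharZero K]
    [NonUnitalNonAssocCommRing A] [Module K A] [SMulCommClass K A A] [IsScalarTower K A A]
    (e : Module.Basis (Fin 3) K A)
    (hAA : e 0 * e 0 = e 0)
    (hAAAa : e 0 * e 1 = (2 : K)⁻¹ • e 0 + (2 : K)⁻¹ • e 1)
    (hAAaa : e 0 * e 2 = e 1)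
    (hAaAa : e 1 * e 1 = (4 : K)⁻¹ • e 0 + (2 : K)⁻¹ • e 1 + (4 : K)⁻¹ • e 2)
    (hAaaa : e 1 * e 2 = (2 : K)⁻¹ • e 1 + (2 : K)⁻¹ • e 2)
    (haaaa : e 2 * e 2 = e 2) :
    ¬ ∃ v : Module.Basis (Fin 3) K A, ∀ i j, i ≠ j → v i * v j = 0 := by
  rintro ⟨v, hv⟩
  have hmul := mul_eq_of_mendel e hAA hAAAa hAAaa hAaAa hAaaa haaaa
  obtain ⟨w, hw⟩ := exists_range_le_span_singleton_of_basis v (gameteFreq e) fun i j hij =>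
    eq_zero_or_eq_zero_of_mul_eq_zero_of_gametic e.linearIndependent _ hmul (hv i j hij)
  rw [range_gameteFreq] at hw
  have hrank : finrank K (K × K) ≤ 1 := by
    rw [← finrank_top]
    exact (Submodule.finrank_mono hw).trans ((finrank_span_le_card {w}).trans (by simp))
  simp at hrank
end

section
/- Let A be the 3-dimensional evolution algebra over a field K with natural basis {e1, e2, e3} and products e1² = e1 + e2, e2² = -(e1 + e2), e3² = -e2 + e3. Then the subalgebra of A generated by u1 = e1 + e2 and u2 = e1 + e3 is a 2-dimensional subalgebra which admits no natural basis; i.e., the class of evolution algebras is not closed under subalgebras. -/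
/-!
Put `u = e₁ + e₂` and `w = e₁ + e₃`. The multiplication table gives `u² = 0`, `uw = u`, `w² = w`,
so `(a u + b w)(c u + d w) = (ad + bc) u + bd w` and the span of `u, w` is a subalgebra.
If `x = a u + b w` and `y = c u + d w` satisfy `xy = 0`, then `ad + bc = 0` and `bd = 0`, hence
`(ad - bc)² = (ad + bc)² - 4 (ac)(bd) = 0`: the determinant of `x, y` vanishes, so no two
orthogonal elements of the subalgebra form a basis.
-/

open Submodule

theorem not_linearIndependent_pair_of_det_eq_zero {R M : Type*} [CommRing R] [Nontrivial R]
    [AddCommGroup M] [Module R M] (u w : M) {a b c d : R} (hdet : a * d - b * c = 0) :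
    ¬ LinearIndependent R ![a • u + b • w, c • u + d • w] := by
  intro h
  obtain ⟨hd, hb⟩ := LinearIndependent.pair_iff.mp h d (-b)
    (by linear_combination (norm := module) hdet • u)
  obtain ⟨hc, ha⟩ := LinearIndependent.pair_iff.mp h c (-a)
    (by linear_combination (norm := module) (-hdet) • w)
  have : a • u + b • w = 0 := by simp [neg_eq_zero.mp ha, neg_eq_zero.mp hb]
  exact h.ne_zero 0 this

section MulTable

variable {K A : Type*} [CommRing K] [NonUnitalNonAssocCommRing A] [Module K A]
  [SMulCommClass K A A] [IsScalarTower K A A] {u w : A}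

theorem smul_add_smul_mul_smul_add_smul (hu : u * u = 0) (huw : u * w = u) (hw : w * w = w)
    (a b c d : K) :
    (a • u + b • w) * (c • u + d • w) = (a * d + b * c) • u + (b * d) • w := by
  rw [add_mul, mul_add, mul_add]
  simp only [smul_mul_assoc, mul_smul_comm, mul_comm w u, hu, huw, hw, smul_zero, smul_smul]
  module

theorem mul_mem_span_pair (hu : u * u = 0) (huw : u * w = u) (hw : w * w = w)
    {x y : A} (hx : x ∈ span K {u, w}) (hy : y ∈ span K {u, w}) : x * y ∈ span K {u, w} := by
  obtain ⟨a, b, rfl⟩ := mem_span_pair.mp hx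
  obtain ⟨c, d, rfl⟩ := mem_span_pair.mp hy
  rw [smul_add_smul_mul_smul_add_smul hu huw hw]
  exact mem_span_pair.mpr ⟨_, _, rfl⟩

theorem not_linearIndependent_of_mul_eq_zero [IsDomain K] (hu : u * u = 0) (huw : u * w = u)
    (hw : w * w = w) (huw_indep : LinearIndependent K ![u, w]) {x y : A}
    (hx : x ∈ span K {u, w}) (hy : y ∈ span K {u, w}) (hxy : x * y = 0) :
    ¬ LinearIndependent K ![x, y] := by
  obtain ⟨a, b, rfl⟩ := mem_span_pair.mp hx
  obtain ⟨c, d, rfl⟩ := mem_span_pair.mp hy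
  rw [smul_add_smul_mul_smul_add_smul hu huw hw] at hxy
  obtain ⟨hu_coeff, hw_coeff⟩ := LinearIndependent.pair_iff.mp huw_indep _ _ hxy
  have hdet : a * d - b * c = 0 := pow_eq_zero_iff two_ne_zero |>.mp <| by
    linear_combination (a * d + b * c) * hu_coeff - 4 * a * c * hw_coeff
  exact not_linearIndependent_pair_of_det_eq_zero u w hdet

end MulTable

theorem linearIndependent_add_add_of_basis {K M : Type*} [CommRing K] [AddCommGroup M]
    [Module K M] (e : Module.Basis (Fin 3) K M) :
    LinearIndependent K ![e 0 + e 1, e 0 + e 2] := by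
  refine LinearIndependent.pair_iff.mpr fun s t hst ↦ ⟨?_, ?_⟩
  · simpa [Finsupp.single_apply] using congrArg (e.repr · 1) hst
  · simpa [Finsupp.single_apply] using congrArg (e.repr · 2) hst

/-- The subalgebra generated by `u₁ = e₁ + e₂` and `u₂ = e₁ + e₃` of the given
3-dimensional evolution algebra is a 2-dimensional subalgebra with no natural basis. -/
theorem subalgebra_not_evolution {K A : Type*} [Field K]
    [NonUnitalNonAssocCommRing A] [Module K A] [SMulCommClass K A A] [IsScalarTower K A A]
    (e : Module.Basis (Fin 3) K A)
    (hnat : ∀ i j, i ≠ j → e i * e j = 0)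
    (h1 : e 0 * e 0 = e 0 + e 1)
    (h2 : e 1 * e 1 = -(e 0 + e 1))
    (h3 : e 2 * e 2 = -(e 1) + e 2) :
    ∀ S : Submodule K A, S = Submodule.span K {e 0 + e 1, e 0 + e 2} →
      (∀ x ∈ S, ∀ y ∈ S, x * y ∈ S) ∧
      Module.finrank K S = 2 ∧
      ¬ ∃ v : Module.Basis (Fin 2) K S, ∀ i j, i ≠ j → (v i : A) * (v j : A) = 0 := by
  rintro S rfl
  have hu : (e 0 + e 1) * (e 0 + e 1) = 0 := by
    simp only [add_mul, mul_add, h1, h2, hnat 0 1 (by decide), hnat 1 0 (by decide)]; abel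
  have huw : (e 0 + e 1) * (e 0 + e 2) = e 0 + e 1 := by
    simp only [add_mul, mul_add, h1, hnat 0 2 (by decide), hnat 1 0 (by decide),
      hnat 1 2 (by decide)]; abel
  have hw : (e 0 + e 2) * (e 0 + e 2) = e 0 + e 2 := by
    simp only [add_mul, mul_add, h1, h3, hnat 0 2 (by decide), hnat 2 0 (by decide)]; abel
  have huw_indep := linearIndependent_add_add_of_basis e
  refine ⟨fun x hx y hy ↦ mul_mem_span_pair hu huw hw hx hy, ?_, ?_⟩
  · rw [← Matrix.range_cons_cons_empty _ _ ![], finrank_span_eq_card huw_indep, Fintype.card_fin]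
  · rintro ⟨v, hv⟩
    have hv_indep : LinearIndependent K ![(v 0 : A), v 1] := by
      rw [show ![(v 0 : A), v 1] = (span K _).subtype ∘ v from List.ofFn_inj.mp rfl]
      exact v.linearIndependent.map' _ (ker_subtype _)
    exact not_linearIndependent_of_mul_eq_zero hu huw hw huw_indep (v 0).2 (v 1).2
      (hv 0 1 (by decide)) hv_indep
end

section
/- Let A be the 3-dimensional evolution algebra over a field K with natural basis {e1, e2, e3} and products e1² = e2 + e3, e2² = e1 + e2, e3² = -(e1 + e2). Then I = span{e1², e2²} = {α e1 + (α+β) e2 + β e3 : α, β ∈ K} is a 2-dimensional ideal of A that has no natural basis; i.e., an ideal of an evolution algebra need not be an evolution ideal. -/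
/-!
Every product in an evolution algebra is a combination of the squares `eᵢ²`; since `e₃² = -e₂²`,
the span `I` of `e₁² = e₂ + e₃` and `e₂² = e₁ + e₂` contains `A²` and is therefore an ideal.
In the coordinates `x = s e₁² + t e₂²` of `I`, the product is
`x x' = t t' e₁² + (t t' + t s' + s t') e₂²`, so `x x' = 0` forces `t t' = 0` and `t s' + s t' = 0`,
hence `t s' = s t' = 0`. Then `(s, t)` and `(s', t')` are proportional, so two elements of `I`
with zero product are never linearly independent.
-/

open Submodule

theorem mul_eq_zero_of_mul_eq_zero_of_mul_add_mul_eq_zero {R : Type*} [CommRing R] [IsReduced R]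
    {a b c d : R} (hac : a * c = 0) (h : a * d + b * c = 0) : a * d = 0 :=
  IsReduced.eq_zero _ ⟨2, by linear_combination (d * a) * h - (b * d) * hac⟩

section EvolutionAlgebra

variable {R A : Type*} [CommSemiring R] [NonUnitalNonAssocSemiring A] [Module R A]
  [SMulCommClass R A A] [IsScalarTower R A A]

theorem sum_smul_mul_sum_smul {ι : Type*} [Fintype ι] {e : ι → A}
    (hnat : ∀ i j, i ≠ j → e i * e j = 0) (x y : ι → R) :
    (∑ i, x i • e i) * (∑ i, y i • e i) = ∑ i, (x i * y i) • (e i * e i) := by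
  rw [Finset.sum_mul_sum]
  refine Finset.sum_congr rfl fun i _ => ?_
  have off_diagonal : ∀ j ∈ Finset.univ, j ≠ i → x i • e i * y j • e j = 0 := fun j _ hji => by
    rw [smul_mul_smul_comm, hnat i j hji.symm, smul_zero]
  rw [Finset.sum_eq_single i off_diagonal (by simp), smul_mul_smul_comm]

theorem mul_mem_span_range_mul_self {ι : Type*} [Fintype ι] (e : Module.Basis ι R A)
    (hnat : ∀ i j, i ≠ j → e i * e j = 0) (a b : A) :
    a * b ∈ span R (Set.range fun i => e i * e i) := by
  rw [← e.sum_repr a, ← e.sum_repr b, sum_smul_mul_sum_smul hnat]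
  exact sum_mem fun i _ => smul_mem _ _ (subset_span ⟨i, rfl⟩)

end EvolutionAlgebra

theorem span_pair_add_eq_setOf {R M : Type*} [CommSemiring R] [AddCommMonoid M] [Module R M]
    (x y z : M) :
    (span R {y + z, x + y} : Set M) = {v | ∃ α β : R, v = α • x + (α + β) • y + β • z} := by
  ext v
  simp only [SetLike.mem_coe, mem_span_pair, Set.mem_ofPred_eq]
  constructor
  · rintro ⟨s, t, rfl⟩
    exact ⟨t, s, by module⟩
  · rintro ⟨α, β, rfl⟩
    exact ⟨β, α, by module⟩

theorem Module.Basis.linearIndependent_add_pair {R M : Type*} [Ring R] [AddCommGroup M]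
    [Module R M] (e : Module.Basis (Fin 3) R M) : LinearIndependent R ![e 1 + e 2, e 0 + e 1] := by
  refine LinearIndependent.pair_iff.mpr fun s t h => ?_
  have h0 := congrArg (e.repr · 0) h
  have h2 := congrArg (e.repr · 2) h
  exact ⟨by simpa using h2, by simpa using h0⟩

theorem span_range_mul_self_le {R A : Type*} [Ring R] [NonUnitalNonAssocRing A] [Module R A]
    (e : Module.Basis (Fin 3) R A) (h1 : e 0 * e 0 = e 1 + e 2)
    (h2 : e 1 * e 1 = e 0 + e 1) (h3 : e 2 * e 2 = -(e 0 + e 1)) :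
    span R (Set.range fun i => e i * e i) ≤ span R {e 1 + e 2, e 0 + e 1} := by
  refine span_le.mpr ?_
  rintro _ ⟨i, rfl⟩
  fin_cases i
  · exact subset_span (by simp [h1])
  · exact subset_span (by simp [h2])
  · simpa [h3] using neg_mem (subset_span (by simp) : e 0 + e 1 ∈ span R {e 1 + e 2, e 0 + e 1})

section Example

variable {K A : Type*} [Field K] [NonUnitalNonAssocCommRing A] [Module K A]
  [SMulCommClass K A A] [IsScalarTower K A A]

theorem combination_mul_combination (e : Module.Basis (Fin 3) K A)
    (hnat : ∀ i j, i ≠ j → e i * e j = 0) (h1 : e 0 * e 0 = e 1 + e 2) (h2 : e 1 * e 1 = e 0 + e 1)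
    (h3 : e 2 * e 2 = -(e 0 + e 1))
    (s t s' t' : K) :
    (s • (e 1 + e 2) + t • (e 0 + e 1)) * (s' • (e 1 + e 2) + t' • (e 0 + e 1)) =
      (t * t') • (e 1 + e 2) + (t * t' + t * s' + s * t') • (e 0 + e 1) := by
  have coords : ∀ s t : K, s • (e 1 + e 2) + t • (e 0 + e 1) = ∑ i, ![t, s + t, s] i • e i := by
    intro s t
    simp only [Fin.sum_univ_three, Matrix.cons_val]
    module
  rw [coords s t, coords s' t', sum_smul_mul_sum_smul hnat]
  simp only [Fin.sum_univ_three, Matrix.cons_val, h1, h2, h3]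
  module

theorem not_linearIndependent_of_mul_eq_zero_s2 (e : Module.Basis (Fin 3) K A)
    (hnat : ∀ i j, i ≠ j → e i * e j = 0) (h1 : e 0 * e 0 = e 1 + e 2) (h2 : e 1 * e 1 = e 0 + e 1)
    (h3 : e 2 * e 2 = -(e 0 + e 1)) {x y : A} (hx : x ∈ span K {e 1 + e 2, e 0 + e 1})
    (hy : y ∈ span K {e 1 + e 2, e 0 + e 1}) (hxy : x * y = 0) :
    ¬ LinearIndependent K ![x, y] := by
  intro hind
  obtain ⟨s, t, rfl⟩ := mem_span_pair.mp hx
  obtain ⟨s', t', rfl⟩ := mem_span_pair.mp hy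
  rw [combination_mul_combination e hnat h1 h2 h3] at hxy
  obtain ⟨htt', hsum⟩ := LinearIndependent.pair_iff.mp e.linearIndependent_add_pair _ _ hxy
  have hcross : t * s' + s * t' = 0 := by linear_combination hsum - htt'
  have hts' : t * s' = 0 := mul_eq_zero_of_mul_eq_zero_of_mul_add_mul_eq_zero htt' hcross
  have hst' : s * t' = 0 := by linear_combination hcross - hts'
  -- `t' x - t y` and `s' x - s y` are multiples of `t s' - s t'`, which vanishes.
  obtain ⟨-, ht⟩ := LinearIndependent.pair_iff.mp hind t' (-t) (by
    linear_combination (norm := module) hst' • (e 1 + e 2) - hts' • (e 1 + e 2))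
  obtain ⟨-, hs⟩ := LinearIndependent.pair_iff.mp hind s' (-s) (by
    linear_combination (norm := module) hts' • (e 0 + e 1) - hst' • (e 0 + e 1))
  exact hind.ne_zero 0 (by simp [neg_eq_zero.mp ht, neg_eq_zero.mp hs])

end Example

/-- In the evolution algebra with `e₁² = e₂ + e₃`, `e₂² = e₁ + e₂`, `e₃² = -(e₁+e₂)`,
the span of `e₁²` and `e₂²` is a 2-dimensional ideal with no natural basis. -/
theorem ideal_not_evolution_ideal {K A : Type*} [Field K]
    [NonUnitalNonAssocCommRing A] [Module K A] [SMulCommClass K A A] [IsScalarTower K A A]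
    (e : Module.Basis (Fin 3) K A)
    (hnat : ∀ i j, i ≠ j → e i * e j = 0)
    (h1 : e 0 * e 0 = e 1 + e 2)
    (h2 : e 1 * e 1 = e 0 + e 1)
    (h3 : e 2 * e 2 = -(e 0 + e 1)) :
    ∀ I : Submodule K A, I = Submodule.span K {e 0 * e 0, e 1 * e 1} →
      (I : Set A) = {x | ∃ α β : K, x = α • e 0 + (α + β) • e 1 + β • e 2} ∧
      (∀ x ∈ I, ∀ a : A, x * a ∈ I) ∧
      Module.finrank K I = 2 ∧
      ¬ ∃ v : Module.Basis (Fin 2) K I, ∀ i j, i ≠ j → (v i : A) * (v j : A) = 0 := by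
  rintro I rfl
  rw [h1, h2]
  refine ⟨span_pair_add_eq_setOf _ _ _,
    fun x _ a => span_range_mul_self_le e h1 h2 h3 (mul_mem_span_range_mul_self e hnat x a), ?_, ?_⟩
  · have hrange : ({e 1 + e 2, e 0 + e 1} : Set A) = Set.range ![e 1 + e 2, e 0 + e 1] := by
      simp [Matrix.range_cons, Matrix.range_empty, Set.pair_comm]
    rw [hrange, finrank_span_eq_card e.linearIndependent_add_pair, Fintype.card_fin]
  · rintro ⟨v, hv⟩
    refine not_linearIndependent_of_mul_eq_zero_s2 e hnat h1 h2 h3 (v 0).2 (v 1).2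
      (hv 0 1 (by decide)) ?_
    have hli : LinearIndependent K (Submodule.subtype _ ∘ v) :=
      v.linearIndependent.map' _ (ker_subtype _)
    convert hli using 1
    ext i
    fin_cases i <;> rfl
end

section
/- If A is an evolution algebra and I is an ideal of A, then the quotient algebra A/I is an evolution algebra, i.e., A/I admits a natural basis. -/
/-!
The images `π (e i)` of a natural basis span `Q` and multiply pairwise to zero, since `π` is
surjective and multiplicative. Any spanning set contains a basis, and a basis drawn from a set
whose distinct elements multiply to zero is natural.
-/

open Submodule

section

variable {R A Q ι : Type*} [Semiring R]

theorem span_range_comp_basis_eq_top [AddCommMonoid A] [AddCommMonoid Q] [Module R A]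
    [Module R Q] (e : Module.Basis ι R A) {π : A →ₗ[R] Q} (hsurj : Function.Surjective π) :
    span R (Set.range (π ∘ e)) = ⊤ := by
  rw [Set.range_comp, ← map_span, e.span_eq, Submodule.map_top, LinearMap.range_eq_top.mpr hsurj]

theorem pairwise_mul_eq_zero_range_comp [NonUnitalNonAssocSemiring A]
    [NonUnitalNonAssocSemiring Q] [Module R A] [Module R Q] {e : ι → A}
    (hnat : ∀ i j, i ≠ j → e i * e j = 0) {π : A →ₗ[R] Q}
    (hmul : ∀ x y : A, π (x * y) = π x * π y) :
    (Set.range (π ∘ e)).Pairwise fun x y => x * y = 0 :=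
  Pairwise.range_pairwise fun i j hij => by
    simp only [Function.onFun, Function.comp_apply, ← hmul, hnat i j hij, map_zero]

end

theorem exists_natural_basis_subset_of_span_eq_top {K Q : Type*} [DivisionRing K]
    [NonUnitalNonAssocRing Q] [Module K Q] {t : Set Q} (hspan : span K t = ⊤)
    (hmul : t.Pairwise fun x y => x * y = 0) :
    ∃ (s : Set Q) (b : Module.Basis s K Q), ∀ i j : s, i ≠ j → b i * b j = 0 := by
  obtain ⟨s, hst, hs_span, hs_li⟩ := exists_linearIndependent K t
  refine ⟨s, .mk hs_li (by rw [Subtype.range_coe, hs_span, hspan]), fun i j hij => ?_⟩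
  rw [Module.Basis.mk_apply, Module.Basis.mk_apply]
  exact hmul (hst i.2) (hst j.2) (Subtype.coe_ne_coe.mpr hij)

theorem quotient_is_evolution_general {K A Q : Type*} [Field K]
    [NonUnitalNonAssocCommRing A] [Module K A]
    [NonUnitalNonAssocCommRing Q] [Module K Q]
    {ι : Type*} (e : Module.Basis ι K A) (hnat : ∀ i j, i ≠ j → e i * e j = 0)
    (π : A →ₗ[K] Q) (hmul : ∀ x y : A, π (x * y) = π x * π y)
    (hsurj : Function.Surjective π) :
    ∃ (s : Set Q) (b : Module.Basis s K Q), ∀ i j : s, i ≠ j → b i * b j = 0 :=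
  exists_natural_basis_subset_of_span_eq_top (span_range_comp_basis_eq_top e hsurj)
    (pairwise_mul_eq_zero_range_comp hnat hmul)

/-- The quotient of an evolution algebra by an ideal is an evolution algebra:
any quotient `Q` of `A` (i.e. the image of a surjective product-preserving linear
map with kernel the ideal `I`) admits a natural basis. -/
theorem quotient_is_evolution {K A Q : Type*} [Field K]
    [NonUnitalNonAssocCommRing A] [Module K A] [SMulCommClass K A A] [IsScalarTower K A A]
    [NonUnitalNonAssocCommRing Q] [Module K Q] [SMulCommClass K Q Q] [IsScalarTower K Q Q]
    {ι : Type*} (e : Module.Basis ι K A) (hnat : ∀ i j, i ≠ j → e i * e j = 0)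
    (I : Submodule K A) (hI : ∀ x ∈ I, ∀ a : A, x * a ∈ I)
    (π : A →ₗ[K] Q) (hmul : ∀ x y : A, π (x * y) = π x * π y)
    (hsurj : Function.Surjective π) (hker : LinearMap.ker π = I) :
    ∃ (s : Set Q) (b : Module.Basis s K Q), ∀ i j : s, i ≠ j → b i * b j = 0 :=
  quotient_is_evolution_general e hnat π hmul hsurj
end

section
/- If f : A → A' is an algebra homomorphism between evolution algebras A and A', then the image of f is an evolution algebra (it admits a natural basis). -/
/-! The vectors `f (e i)` span the image of `f`, and two distinct ones multiply to zero: if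
`f (e i) ≠ f (e j)` then `i ≠ j`, so `f (e i) * f (e j) = f (e i * e j) = 0`. A spanning set of a
vector space contains a basis, and that basis inherits the pairwise vanishing of products. -/

open Set Submodule

theorem Module.Basis.exists_pairwise_of_span_eq_top {K V : Type*} [Field K] [AddCommGroup V]
    [Module K V] {t : Set V} (ht : span K t = ⊤) {r : V → V → Prop} (hr : t.Pairwise r) :
    ∃ (s : Set V) (b : Basis s K V), Pairwise fun i j ↦ r (b i) (b j) :=
  let b := Basis.ofSpan ht.ge
  ⟨_, b, fun i j hij ↦ hr (Basis.ofSpan_subset ht.ge (mem_range_self i))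
    (Basis.ofSpan_subset ht.ge (mem_range_self j)) (b.injective.ne hij)⟩

theorem Submodule.exists_basis_pairwise_of_span_eq {K V : Type*} [Field K] [AddCommGroup V]
    [Module K V] {W : Submodule K V} {t : Set V} (ht : span K t = W) {r : V → V → Prop}
    (hr : t.Pairwise r) :
    ∃ (s : Set W) (b : Module.Basis s K W), Pairwise fun i j ↦ r (b i) (b j) := by
  subst ht
  have hr' : (((↑) : span K t → V) ⁻¹' t).Pairwise fun x y ↦ r x y :=
    fun x hx y hy hxy ↦ hr hx hy (Subtype.coe_injective.ne hxy)
  exact Module.Basis.exists_pairwise_of_span_eq_top span_span_coe_preimage hr'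

theorem LinearMap.range_eq_span_range_comp_basis {K V V' ι : Type*} [Semiring K]
    [AddCommMonoid V] [Module K V] [AddCommMonoid V'] [Module K V'] (e : Module.Basis ι K V)
    (f : V →ₗ[K] V') : range f = span K (Set.range (f ∘ e)) := by
  rw [range_eq_map, ← e.span_eq, Set.range_comp, span_image]

theorem Set.pairwise_range_comp_mul_eq_zero {ι M N : Type*} [Mul M] [Zero M] [Mul N] [Zero N]
    {f : M → N} (hf : ∀ x y, f (x * y) = f x * f y) (hf0 : f 0 = 0) {v : ι → M}
    (hv : Pairwise fun i j ↦ v i * v j = 0) :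
    (range (f ∘ v)).Pairwise fun x y ↦ x * y = 0 := by
  rintro _ ⟨i, rfl⟩ _ ⟨j, rfl⟩ hij
  rw [Function.comp_apply, Function.comp_apply, ← hf, hv (ne_of_apply_ne _ hij), hf0]

theorem image_is_evolution_general {K A A' : Type*} [Field K]
    [NonUnitalNonAssocCommRing A] [Module K A]
    [NonUnitalNonAssocCommRing A'] [Module K A']
    {ι : Type*} (e : Module.Basis ι K A) (hnat : ∀ i j, i ≠ j → e i * e j = 0)
    (f : A →ₗ[K] A') (hmul : ∀ x y : A, f (x * y) = f x * f y) :
    ∃ (s : Set (LinearMap.range f)) (b : Module.Basis s K (LinearMap.range f)),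
      ∀ i j : s, i ≠ j → (b i : A') * (b j : A') = 0 := by
  obtain ⟨s, b, hb⟩ := Submodule.exists_basis_pairwise_of_span_eq
    (f.range_eq_span_range_comp_basis e).symm
    (Set.pairwise_range_comp_mul_eq_zero hmul f.map_zero hnat)
  exact ⟨s, b, fun i j hij ↦ hb hij⟩

/-- The image of an algebra homomorphism between evolution algebras is an
evolution algebra (it admits a natural basis). -/
theorem image_is_evolution {K A A' : Type*} [Field K]
    [NonUnitalNonAssocCommRing A] [Module K A] [SMulCommClass K A A] [IsScalarTower K A A]
    [NonUnitalNonAssocCommRing A'] [Module K A'] [SMulCommClass K A' A'] [IsScalarTower K A' A']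
    {ι ι' : Type*} (e : Module.Basis ι K A) (hnat : ∀ i j, i ≠ j → e i * e j = 0)
    (e' : Module.Basis ι' K A') (hnat' : ∀ i j, i ≠ j → e' i * e' j = 0)
    (f : A →ₗ[K] A') (hmul : ∀ x y : A, f (x * y) = f x * f y) :
    ∃ (s : Set (LinearMap.range f)) (b : Module.Basis s K (LinearMap.range f)),
      ∀ i j : s, i ≠ j → (b i : A') * (b j : A') = 0 :=
  image_is_evolution_general e hnat f hmul
end

section
/- Let A be an evolution algebra with natural basis B = {e_i : i ∈ Λ} and let Λ₀(B) = {i ∈ Λ : e_i² = 0}. Then the annihilator ann(A) = {x ∈ A : xA = 0} equals the linear span of {e_i : i ∈ Λ₀(B)}. -/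
/-! For a natural basis, `x * e i = xᵢ • e i²`: right multiplication by `e i` reads off the
`i`-th coordinate of `x`. Since `A` is commutative and multiplication is linear, `x` annihilates
`A` iff it kills every `e i`, i.e. iff `xᵢ = 0` whenever `e i² ≠ 0`. -/

namespace Module.Basis

variable {R A ι : Type*} [Semiring R]

theorem mul_eq_repr_smul_mul_self [NonUnitalNonAssocSemiring A] [Module R A]
    [IsScalarTower R A A] {e : Basis ι R A} (hnat : ∀ i j, i ≠ j → e i * e j = 0)
    (x : A) (i : ι) :
    x * e i = e.repr x i • (e i * e i) := by
  have hmap : LinearMap.mulRight R (e i) = (e.coord i).smulRight (e i * e i) := by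
    refine e.ext fun j => ?_
    rcases eq_or_ne j i with rfl | hji
    · simp
    · simp [hnat j i hji, Finsupp.single_eq_of_ne hji.symm]
  exact LinearMap.congr_fun hmap x

theorem forall_mul_eq_zero_iff [NonUnitalNonAssocCommSemiring A] [Module R A]
    [IsScalarTower R A A] (e : Basis ι R A) {x : A} :
    (∀ a, x * a = 0) ↔ ∀ i, x * e i = 0 := by
  simp only [mul_comm x, ← LinearMap.mulRight_apply (R := R)]
  exact ⟨fun h i => h (e i), fun h => LinearMap.congr_fun (e.ext (f₂ := 0) h)⟩

end Module.Basis

theorem annihilator_eq_span_zero_squares_general {K A : Type*} [Field K]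
    [NonUnitalNonAssocCommRing A] [Module K A] [IsScalarTower K A A]
    {ι : Type*} (e : Module.Basis ι K A) (hnat : ∀ i j, i ≠ j → e i * e j = 0) :
    {x : A | ∀ a : A, x * a = 0} =
      ↑(Submodule.span K (e '' {i : ι | e i * e i = 0})) := by
  ext x
  rw [Set.mem_ofPred_eq, SetLike.mem_coe, e.mem_span_image, Set.subset_def,
    e.forall_mul_eq_zero_iff]
  refine forall_congr' fun i => ?_
  rw [e.mul_eq_repr_smul_mul_self hnat, smul_eq_zero, Finset.mem_coe, Finsupp.mem_support_iff,
    or_iff_not_imp_left, Set.mem_ofPred_eq]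

/-- The annihilator of an evolution algebra is the linear span of the natural basis
elements of zero square. -/
theorem annihilator_eq_span_zero_squares {K A : Type*} [Field K]
    [NonUnitalNonAssocCommRing A] [Module K A] [SMulCommClass K A A] [IsScalarTower K A A]
    {ι : Type*} (e : Module.Basis ι K A) (hnat : ∀ i j, i ≠ j → e i * e j = 0) :
    {x : A | ∀ a : A, x * a = 0} =
      ↑(Submodule.span K (e '' {i : ι | e i * e i = 0})) :=
  annihilator_eq_span_zero_squares_general e hnat
end

section
/- An evolution algebra A is non-degenerate (i.e., has some natural basis all of whose elements have nonzero square) if and only if ann(A) = 0. Consequently, if one natural basis of A consists of elements of nonzero square, then every natural basis of A consists of elements of nonzero square. -/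
/-!
In a natural basis, multiplication by `e_j` only sees the `j`-th coordinate: `x * e_j = x_j e_j²`.
Hence if every `e_j²` is nonzero, an annihilating `x` has all coordinates zero. Conversely,
if `e_i² = 0` then `e_i` annihilates every basis vector, so `ann(A) = 0` forces `e_i² ≠ 0`
for every natural basis, which gives both statements at once.
-/

namespace Module.Basis

variable {K A ι : Type*} [Field K] [NonUnitalNonAssocCommRing A] [Module K A] (b : Basis ι K A)

theorem pairwise_mul_reindexRange_eq_zero (hb : Pairwise fun i j => b i * b j = 0) :
    Pairwise fun i j => b.reindexRange i * b.reindexRange j = 0 := by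
  rintro ⟨_, i, rfl⟩ ⟨_, j, rfl⟩ hij
  simp only [reindexRange_apply]
  exact hb fun h => hij (by subst h; rfl)

section IsScalarTower

variable [IsScalarTower K A A]

theorem mul_basis_eq_repr_smul_mul_self (hb : Pairwise fun i j => b i * b j = 0)
    (x : A) (j : ι) : x * b j = b.repr x j • (b j * b j) := by
  have key : LinearMap.mulRight K (b j) = (b.coord j).smulRight (b j * b j) := by
    refine b.ext fun i => ?_
    rcases eq_or_ne i j with rfl | hij
    · simp
    · simp [hb hij, Finsupp.single_eq_of_ne hij.symm]
  exact LinearMap.congr_fun key x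

theorem eq_zero_of_forall_mul_eq_zero (hb : Pairwise fun i j => b i * b j = 0)
    (hsq : ∀ i, b i * b i ≠ 0) {x : A} (hx : ∀ a, x * a = 0) : x = 0 := by
  refine b.ext_elem_iff.mpr fun j => ?_
  have hxj := hx (b j)
  rw [b.mul_basis_eq_repr_smul_mul_self hb, smul_eq_zero] at hxj
  simpa using hxj.resolve_right (hsq j)

end IsScalarTower

section SMulCommClass

variable [SMulCommClass K A A]

theorem mul_eq_zero_of_forall_mul_basis_eq_zero {x : A} (h : ∀ i, x * b i = 0) (a : A) :
    x * a = 0 :=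
  LinearMap.congr_fun (b.ext (f₁ := LinearMap.mulLeft K x) (f₂ := 0) h) a

theorem mul_self_ne_zero_of_ann_eq_zero (hb : Pairwise fun i j => b i * b j = 0)
    (hann : ∀ x : A, (∀ a, x * a = 0) → x = 0) (i : ι) : b i * b i ≠ 0 := by
  intro hsq
  refine b.ne_zero i (hann _ (b.mul_eq_zero_of_forall_mul_basis_eq_zero fun j => ?_))
  rcases eq_or_ne i j with rfl | hij
  exacts [hsq, hb hij]

end SMulCommClass

end Module.Basis

/-- An evolution algebra is non-degenerate iff its annihilator is zero; consequently
non-degeneracy does not depend on the choice of natural basis. -/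
theorem nondegenerate_iff_ann_zero {K A : Type*} [Field K]
    [NonUnitalNonAssocCommRing A] [Module K A] [SMulCommClass K A A] [IsScalarTower K A A]
    {ι₀ : Type*} (e₀ : Module.Basis ι₀ K A) (hnat₀ : ∀ i j, i ≠ j → e₀ i * e₀ j = 0) :
    ((∃ (s : Set A) (b : Module.Basis s K A),
        (∀ i j : s, i ≠ j → b i * b j = 0) ∧ ∀ i : s, b i * b i ≠ 0) ↔
      (∀ x : A, (∀ a : A, x * a = 0) → x = 0)) ∧
    (∀ {ι ι' : Type*} (b : Module.Basis ι K A) (b' : Module.Basis ι' K A),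
      (∀ i j, i ≠ j → b i * b j = 0) → (∀ i, b i * b i ≠ 0) →
      (∀ i j, i ≠ j → b' i * b' j = 0) → ∀ i, b' i * b' i ≠ 0) := by
  refine ⟨⟨?_, fun hann => ?_⟩, ?_⟩
  · rintro ⟨s, b, hnat, hsq⟩ x
    exact b.eq_zero_of_forall_mul_eq_zero hnat hsq
  · have hnat := e₀.pairwise_mul_reindexRange_eq_zero hnat₀
    exact ⟨_, e₀.reindexRange, hnat, e₀.reindexRange.mul_self_ne_zero_of_ann_eq_zero hnat hann⟩
  · intro ι ι' b b' hnat hsq hnat'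
    exact b'.mul_self_ne_zero_of_ann_eq_zero hnat' fun x => b.eq_zero_of_forall_mul_eq_zero hnat hsq
end

section
/- For any two natural bases B and B' of an evolution algebra A, the cardinality of {e ∈ B : e² = 0} equals the cardinality of {e ∈ B' : e² = 0}; both equal the dimension of ann(A). -/
/-- The annihilator of a commutative nonassociative algebra, as a submodule. -/
def annSubmodule (K A : Type*) [Field K] [NonUnitalNonAssocCommRing A] [Module K A]
    [SMulCommClass K A A] [IsScalarTower K A A] : Submodule K A where
  carrier := {x | ∀ a : A, x * a = 0}
  add_mem' := by intro x y hx hy a; rw [add_mul, hx a, hy a, add_zero]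
  zero_mem' := by intro a; rw [zero_mul]
  smul_mem' := by intro c x hx a; rw [smul_mul_assoc, hx a, smul_zero]

universe u v w

/-! In a natural basis `b` multiplication by `b j` reads off the `j`-th coordinate:
`x * b j = xⱼ • b j ^ 2`. Hence `x` annihilates `A` iff `xⱼ = 0` whenever `b j ^ 2 ≠ 0`, i.e.
`ann A` is spanned by the basis vectors of zero square, which therefore form a basis of it;
the invariance of the dimension of `ann A` gives the claim. -/

namespace Module.Basis

def IsNatural {R A ι : Type*} [Semiring R] [AddCommMonoid A] [Module R A] [Mul A]
    (b : Basis ι R A) : Prop :=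
  ∀ i j, i ≠ j → b i * b j = 0

theorem IsNatural.mul_basis {R A ι : Type*} [CommSemiring R] [NonUnitalNonAssocSemiring A]
    [Module R A] [IsScalarTower R A A] {b : Basis ι R A} (hb : b.IsNatural) (x : A) (j : ι) :
    x * b j = b.repr x j • (b j * b j) := by
  conv_lhs => rw [← b.linearCombination_repr x, Finsupp.linearCombination_apply, Finsupp.sum_mul]
  rw [Finsupp.sum_eq_single j]
  · rw [smul_mul_assoc]
  · intro i _ hij
    rw [smul_mul_assoc, hb i j hij, smul_zero]
  · intro _
    rw [zero_smul, zero_mul]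

end Module.Basis

section Annihilator

variable {K : Type*} {A : Type u} [Field K] [NonUnitalNonAssocCommRing A] [Module K A]
  [SMulCommClass K A A] [IsScalarTower K A A] {ι : Type v}

theorem mem_annSubmodule_iff_mul_basis (b : Module.Basis ι K A) {x : A} :
    x ∈ annSubmodule K A ↔ ∀ j, x * b j = 0 := by
  refine ⟨fun hx j => hx (b j), fun hx a => ?_⟩
  have hmul : LinearMap.mulLeft K x = 0 := b.ext fun j => hx j
  exact LinearMap.congr_fun hmul a

theorem annSubmodule_eq_span_zero_squares {b : Module.Basis ι K A} (hb : b.IsNatural) :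
    annSubmodule K A = Submodule.span K (b '' {i | b i * b i = 0}) := by
  ext x
  rw [mem_annSubmodule_iff_mul_basis b, b.mem_span_image]
  refine forall_congr' fun j => ?_
  rw [hb.mul_basis, smul_eq_zero, or_iff_not_imp_left, Finset.mem_coe, Finsupp.mem_support_iff]
  rfl

noncomputable def annBasis {b : Module.Basis ι K A} (hb : b.IsNatural) :
    Module.Basis {i : ι // b i * b i = 0} K (annSubmodule K A) :=
  (Module.Basis.span (b.linearIndependent.comp Subtype.val Subtype.val_injective)).map
    (LinearEquiv.ofEq _ _ <| by
      rw [annSubmodule_eq_span_zero_squares hb, Set.range_comp, Subtype.range_coe_subtype])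

end Annihilator

/-- For any two natural bases of an evolution algebra, the number of basis elements of
zero square is the same; both equal the dimension of the annihilator. -/
theorem card_zero_squares_eq {K : Type*} {A : Type u} [Field K]
    [NonUnitalNonAssocCommRing A] [Module K A] [SMulCommClass K A A] [IsScalarTower K A A]
    {ι : Type v} {ι' : Type w} (b : Module.Basis ι K A) (b' : Module.Basis ι' K A)
    (hb : ∀ i j, i ≠ j → b i * b j = 0) (hb' : ∀ i j, i ≠ j → b' i * b' j = 0) :
    Cardinal.lift.{w} (Cardinal.mk {i : ι // b i * b i = 0}) =
      Cardinal.lift.{v} (Cardinal.mk {i : ι' // b' i * b' i = 0}) ∧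
    Cardinal.lift.{u} (Cardinal.mk {i : ι // b i * b i = 0}) =
      Cardinal.lift.{v} (Module.rank K (annSubmodule K A)) :=
  ⟨mk_eq_mk_of_basis (annBasis hb) (annBasis hb'), (annBasis hb).mk_eq_rank⟩
end

section
/- For an evolution algebra A, the following are equivalent: rad(A) = 0; ann(A) = 0; A is non-degenerate. -/
/-- `N` is an ideal of the commutative algebra `A` with the absorption property. -/
def IsAbsorbIdeal {K A : Type*} [Field K] [NonUnitalNonAssocCommRing A] [Module K A]
    [SMulCommClass K A A] [IsScalarTower K A A] (N : Submodule K A) : Prop :=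
  (∀ x ∈ N, ∀ a : A, x * a ∈ N) ∧ ∀ x : A, (∀ a : A, x * a ∈ N) → x ∈ N

/-!
The annihilator lies in every absorbing ideal, and `0` is absorbing as soon as the annihilator
vanishes; hence `rad(A) = 0 ↔ ann(A) = 0`. In a natural basis `x * b j = x_j • b j ^ 2`, so a
basis vector of zero square is a nonzero element of the annihilator, while if all squares are
nonzero an annihilating `x` has all coordinates zero.
-/

section

variable {K A : Type*} [Field K] [NonUnitalNonAssocCommRing A] [Module K A] [IsScalarTower K A A]
  {ι : Type*} {b : Module.Basis ι K A}

theorem mul_basis_eq_repr_smul_mul_self (hb : ∀ i j, i ≠ j → b i * b j = 0) (x : A) (j : ι) :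
    x * b j = b.repr x j • (b j * b j) := by
  have hmul : LinearMap.mulRight K (b j) = (b.coord j).smulRight (b j * b j) := by
    refine b.ext fun i => ?_
    by_cases hij : i = j
    · subst hij
      simp
    · simp [hb i j hij, Finsupp.single_eq_of_ne' hij]
  exact LinearMap.congr_fun hmul x

variable [SMulCommClass K A A]

theorem IsAbsorbIdeal.annSubmodule_le {M : Submodule K A} (hM : IsAbsorbIdeal M) :
    annSubmodule K A ≤ M :=
  fun x hx => hM.2 x fun a => (hx a).symm ▸ M.zero_mem

theorem isAbsorbIdeal_bot (h : annSubmodule K A = ⊥) : IsAbsorbIdeal (⊥ : Submodule K A) := by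
  refine ⟨fun x hx a => ?_, fun x hx => ?_⟩
  · rw [Submodule.mem_bot] at hx ⊢
    rw [hx, zero_mul]
  · rw [← h]
    exact fun a => (Submodule.mem_bot K).1 (hx a)

theorem sInf_isAbsorbIdeal_eq_bot_iff :
    sInf {M : Submodule K A | IsAbsorbIdeal M} = ⊥ ↔ annSubmodule K A = ⊥ := by
  refine ⟨fun h => ?_, fun h => ?_⟩
  · rw [eq_bot_iff, ← h]
    exact le_sInf fun M hM => hM.annSubmodule_le
  · exact eq_bot_iff.2 (sInf_le (isAbsorbIdeal_bot h))

theorem mem_annSubmodule_of_forall_mul_basis {x : A} (hx : ∀ i, x * b i = 0) :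
    x ∈ annSubmodule K A := by
  have hmul : LinearMap.mulLeft K x = 0 := b.ext fun i => hx i
  exact fun a => LinearMap.congr_fun hmul a

theorem annSubmodule_eq_bot_of_mul_self_ne_zero (hb : ∀ i j, i ≠ j → b i * b j = 0)
    (hsq : ∀ i, b i * b i ≠ 0) : annSubmodule K A = ⊥ := by
  refine eq_bot_iff.2 fun x hx => (Submodule.mem_bot K).2 ?_
  have hrepr : b.repr x = 0 := Finsupp.ext fun j =>
    (smul_eq_zero.1 ((mul_basis_eq_repr_smul_mul_self hb x j).symm.trans (hx (b j)))).resolve_right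
      (hsq j)
  simpa using congrArg b.repr.symm hrepr

theorem mul_self_ne_zero_of_annSubmodule_eq_bot (hb : ∀ i j, i ≠ j → b i * b j = 0)
    (h : annSubmodule K A = ⊥) (i : ι) : b i * b i ≠ 0 := by
  intro hsq
  have hann : b i ∈ annSubmodule K A := mem_annSubmodule_of_forall_mul_basis fun j => by
    obtain rfl | hij := eq_or_ne i j
    exacts [hsq, hb i j hij]
  rw [h, Submodule.mem_bot] at hann
  exact b.ne_zero i hann

end

/-- For an evolution algebra `A`: `rad(A) = 0` iff `ann(A) = 0` iff `A` is
non-degenerate. -/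
theorem rad_zero_iff_ann_zero_iff_nondegenerate {K A : Type*} [Field K]
    [NonUnitalNonAssocCommRing A] [Module K A] [SMulCommClass K A A] [IsScalarTower K A A]
    {ι : Type*} (e : Module.Basis ι K A) (hnat : ∀ i j, i ≠ j → e i * e j = 0) :
    (sInf {M : Submodule K A | IsAbsorbIdeal M} = ⊥ ↔ annSubmodule K A = ⊥) ∧
    (annSubmodule K A = ⊥ ↔
      ∃ (s : Set A) (b : Module.Basis s K A),
        (∀ i j : s, i ≠ j → b i * b j = 0) ∧ ∀ i : s, b i * b i ≠ 0) := by
  refine ⟨sInf_isAbsorbIdeal_eq_bot_iff, fun h => ?_, fun ⟨_, b, hb, hsq⟩ => ?_⟩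
  · have hnat' : ∀ i j, i ≠ j → e.reindexRange i * e.reindexRange j = 0 := by
      rintro ⟨_, i, rfl⟩ ⟨_, j, rfl⟩ hij
      simp only [Module.Basis.reindexRange_apply]
      exact hnat i j fun h => hij (by rw [h])
    exact ⟨_, e.reindexRange, hnat', mul_self_ne_zero_of_annSubmodule_eq_bot hnat' h⟩
  · exact annSubmodule_eq_bot_of_mul_self_ne_zero hb hsq
end

section
/- Let A be an evolution algebra with non-zero product. If A has no non-trivial ideals of zero square (i.e., A is semiprime), then A is non-degenerate. Moreover, if A is nondegenerate in the classical sense (a(Aa) = 0 implies a = 0), then A is semiprime. -/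
/-!
In an evolution algebra a basis vector `e i` of square zero kills every `e j`, hence lies in the
annihilator of `A`, which is an ideal of zero square; semiprimeness makes it vanish. Conversely,
if `N` is an ideal of zero square and `a ∈ N`, then `x * a ∈ N` for all `x`, so `a * (x * a) = 0`.
-/

section Annihilator

variable (K A : Type*) [CommSemiring K] [NonUnitalNonAssocSemiring A] [Module K A]

def IsSemiprime : Prop :=
  ∀ N : Submodule K A, (∀ x ∈ N, ∀ a : A, x * a ∈ N) → (∀ x ∈ N, ∀ y ∈ N, x * y = 0) → N = ⊥

def mulAnnihilator [IsScalarTower K A A] : Submodule K A where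
  carrier := {x | ∀ a : A, x * a = 0}
  zero_mem' := zero_mul
  add_mem' hx hy a := by rw [add_mul, hx a, hy a, add_zero]
  smul_mem' c x hx a := by rw [smul_mul_assoc, hx a, smul_zero]

variable {K A}

theorem mem_mulAnnihilator [IsScalarTower K A A] {x : A} :
    x ∈ mulAnnihilator K A ↔ ∀ a : A, x * a = 0 :=
  Iff.rfl

theorem IsSemiprime.mulAnnihilator_eq_bot [IsScalarTower K A A] (h : IsSemiprime K A) :
    mulAnnihilator K A = ⊥ :=
  h _ (fun x hx a => by rw [hx a]; exact zero_mem _) (fun x hx y _ => hx y)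

end Annihilator

theorem isSemiprime_of_mul_mul_self_eq_zero {K A : Type*} [CommSemiring K]
    [NonUnitalNonAssocCommSemiring A] [Module K A]
    (h : ∀ a : A, (∀ x : A, a * (x * a) = 0) → a = 0) : IsSemiprime K A := by
  intro N hideal hsq
  refine (Submodule.eq_bot_iff N).2 fun a ha => h a fun x => hsq a ha _ ?_
  rw [mul_comm]
  exact hideal a ha x

namespace Module.Basis

variable {K A : Type*} [CommSemiring K] [NonUnitalNonAssocCommSemiring A] [Module K A]
  [IsScalarTower K A A] {ι : Type*}

theorem mem_mulAnnihilator_of_mul_self_eq_zero (e : Basis ι K A)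
    (hnat : ∀ i j, i ≠ j → e i * e j = 0) {i : ι} (hi : e i * e i = 0) :
    e i ∈ mulAnnihilator K A := by
  have hright : LinearMap.mulRight K (e i) = 0 := e.ext fun j => by
    by_cases hji : j = i
    · simpa [hji] using hi
    · simpa using hnat j i hji
  refine mem_mulAnnihilator.2 fun a => ?_
  rw [mul_comm]
  exact LinearMap.congr_fun hright a

theorem mul_self_ne_zero_of_mulAnnihilator_eq_bot [Nontrivial K] (e : Basis ι K A)
    (hnat : ∀ i j, i ≠ j → e i * e j = 0) (hann : mulAnnihilator K A = ⊥) (i : ι) :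
    e i * e i ≠ 0 := fun hi =>
  e.ne_zero i <| (Submodule.mem_bot K).1 <| hann ▸ e.mem_mulAnnihilator_of_mul_self_eq_zero hnat hi

end Module.Basis

theorem semiprime_implies_nondegenerate_general {K A : Type*} [Field K]
    [NonUnitalNonAssocCommRing A] [Module K A] [IsScalarTower K A A]
    {ι : Type*} (e : Module.Basis ι K A) (hnat : ∀ i j, i ≠ j → e i * e j = 0) :
    ((∀ N : Submodule K A, (∀ x ∈ N, ∀ a : A, x * a ∈ N) →
        (∀ x ∈ N, ∀ y ∈ N, x * y = 0) → N = ⊥) →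
      ∃ (s : Set A) (b : Module.Basis s K A),
        (∀ i j : s, i ≠ j → b i * b j = 0) ∧ ∀ i : s, b i * b i ≠ 0) ∧
    ((∀ a : A, (∀ x : A, a * (x * a) = 0) → a = 0) →
      ∀ N : Submodule K A, (∀ x ∈ N, ∀ a : A, x * a ∈ N) →
        (∀ x ∈ N, ∀ y ∈ N, x * y = 0) → N = ⊥) := by
  refine ⟨fun hsemi => ?_, isSemiprime_of_mul_mul_self_eq_zero⟩
  have hsq := e.mul_self_ne_zero_of_mulAnnihilator_eq_bot hnat
    (IsSemiprime.mulAnnihilator_eq_bot hsemi)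
  refine ⟨Set.range e, e.reindexRange, ?_, ?_⟩
  · rintro ⟨-, i, rfl⟩ ⟨-, j, rfl⟩ hij
    rw [e.reindexRange_self i, e.reindexRange_self j]
    exact hnat i j fun h => hij (by rw [h])
  · rintro ⟨-, i, rfl⟩
    rw [e.reindexRange_self i]
    exact hsq i

/-- For an evolution algebra with non-zero product: semiprime implies non-degenerate,
and classical nondegeneracy implies semiprime. -/
theorem semiprime_implies_nondegenerate {K A : Type*} [Field K]
    [NonUnitalNonAssocCommRing A] [Module K A] [SMulCommClass K A A] [IsScalarTower K A A]
    {ι : Type*} (e : Module.Basis ι K A) (hnat : ∀ i j, i ≠ j → e i * e j = 0)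
    (hA2 : ∃ a b : A, a * b ≠ 0) :
    ((∀ N : Submodule K A, (∀ x ∈ N, ∀ a : A, x * a ∈ N) →
        (∀ x ∈ N, ∀ y ∈ N, x * y = 0) → N = ⊥) →
      ∃ (s : Set A) (b : Module.Basis s K A),
        (∀ i j : s, i ≠ j → b i * b j = 0) ∧ ∀ i : s, b i * b i ≠ 0) ∧
    ((∀ a : A, (∀ x : A, a * (x * a) = 0) → a = 0) →
      ∀ N : Submodule K A, (∀ x ∈ N, ∀ a : A, x * a ∈ N) →
        (∀ x ∈ N, ∀ y ∈ N, x * y = 0) → N = ⊥) :=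
  semiprime_implies_nondegenerate_general e hnat
end

section
/- The 2-dimensional evolution algebra A over a field K with natural basis {e1, e2} and products e1² = e2, e2² = e1 + e2 is semiprime (has no non-zero ideal I with I² = 0) but is not nondegenerate in the classical sense, since e1(Ae1) = 0 while e1 ≠ 0. -/
/-!
Writing `x = a e₁ + b e₂`, one gets `x² = b² e₁ + (a² + b²) e₂`, so `x² = 0` forces `b = 0` and
then `a = 0`: the algebra has no non-zero elements of square zero, let alone non-zero ideals of
square zero. On the other hand `A e₁ ⊆ K e₂`, which `e₁` annihilates.
-/

theorem Module.Basis.eq_repr_zero_smul_add_repr_one_smul {R M : Type*} [Semiring R]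
    [AddCommMonoid M] [Module R M] (e : Module.Basis (Fin 2) R M) (x : M) :
    x = e.repr x 0 • e 0 + e.repr x 1 • e 1 := by
  conv_lhs => rw [← e.sum_repr x]
  exact Fin.sum_univ_two _

section

variable {K A : Type*} [CommRing K] [NonUnitalNonAssocCommRing A] [Module K A]
  [IsScalarTower K A A] {e : Module.Basis (Fin 2) K A}

theorem mul_basis_zero (hnat : ∀ i j, i ≠ j → e i * e j = 0) (h1 : e 0 * e 0 = e 1)
    (x : A) : x * e 0 = e.repr x 0 • e 1 := by
  rw [e.eq_repr_zero_smul_add_repr_one_smul x]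
  simp [add_mul, smul_mul_assoc, h1, hnat 1 0 (by decide)]

variable [SMulCommClass K A A]

theorem basis_zero_mul_mul_basis_zero (hnat : ∀ i j, i ≠ j → e i * e j = 0)
    (h1 : e 0 * e 0 = e 1) (x : A) : e 0 * (x * e 0) = 0 := by
  rw [mul_basis_zero hnat h1, mul_smul_comm, hnat 0 1 (by decide), smul_zero]

theorem smul_add_smul_mul_self (hnat : ∀ i j, i ≠ j → e i * e j = 0) (h1 : e 0 * e 0 = e 1)
    (h2 : e 1 * e 1 = e 0 + e 1) (a b : K) :
    (a • e 0 + b • e 1) * (a • e 0 + b • e 1) = (b * b) • e 0 + (a * a + b * b) • e 1 := by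
  simp only [add_mul, mul_add, smul_mul_assoc, mul_smul_comm, smul_smul, h1, h2,
    hnat 0 1 (by decide), hnat 1 0 (by decide), smul_zero, add_zero, zero_add]
  module

theorem eq_zero_of_mul_self_eq_zero_of_basis [IsReduced K]
    (hnat : ∀ i j, i ≠ j → e i * e j = 0) (h1 : e 0 * e 0 = e 1) (h2 : e 1 * e 1 = e 0 + e 1)
    {x : A} (hx : x * x = 0) : x = 0 := by
  rw [e.eq_repr_zero_smul_add_repr_one_smul x] at hx ⊢
  generalize e.repr x 0 = a, e.repr x 1 = b at hx ⊢
  have hcoord := congrArg e.repr ((smul_add_smul_mul_self hnat h1 h2 a b).symm.trans hx)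
  have hb : b * b = 0 := by simpa using DFunLike.congr_fun hcoord 0
  have ha : a * a = 0 := by simpa [hb] using DFunLike.congr_fun hcoord 1
  rw [IsReduced.eq_zero a ⟨2, (sq a).trans ha⟩, IsReduced.eq_zero b ⟨2, (sq b).trans hb⟩,
    zero_smul, zero_smul, add_zero]

end

/-- The evolution algebra with `e₁² = e₂`, `e₂² = e₁ + e₂` is semiprime but not
classically nondegenerate: `e₁ (A e₁) = 0` while `e₁ ≠ 0`. -/
theorem semiprime_not_classically_nondegenerate {K A : Type*} [Field K]
    [NonUnitalNonAssocCommRing A] [Module K A] [SMulCommClass K A A] [IsScalarTower K A A]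
    (e : Module.Basis (Fin 2) K A)
    (hnat : ∀ i j, i ≠ j → e i * e j = 0)
    (h1 : e 0 * e 0 = e 1)
    (h2 : e 1 * e 1 = e 0 + e 1) :
    (∀ N : Submodule K A, (∀ x ∈ N, ∀ a : A, x * a ∈ N) →
        (∀ x ∈ N, ∀ y ∈ N, x * y = 0) → N = ⊥) ∧
    (∀ x : A, e 0 * (x * e 0) = 0) ∧ e 0 ≠ 0 :=
  ⟨fun N _ hsq => (Submodule.eq_bot_iff N).2 fun x hx =>
      eq_zero_of_mul_self_eq_zero_of_basis hnat h1 h2 (hsq x hx x hx),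
    basis_zero_mul_mul_basis_zero hnat h1, e.ne_zero 0⟩
end

section
/- Let A be an evolution algebra with natural basis B = {e_i : i ∈ Λ}. For every k ∈ Λ, the ideal of A generated by e_k² equals the linear span of {e_j² : j ∈ D(k) ∪ {k}}, and the ideal generated by e_k equals K e_k + ⟨e_k²⟩, where D(k) is the set of descendents of k. -/
/-!
In an evolution algebra `x * e_i = x_i e_i²`, so a subspace containing `e_j²` for every `j` in
the support of `x` contains `x A`. Taking `x = e_j²`, whose support is `D¹(j)`, shows that the
span of the squares over `{k} ∪ D(k)` is an ideal; conversely every ideal containing `e_j²`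
contains `ω_{ij}⁻¹ (e_j² e_i) = e_i²` for `i ∈ D¹(j)`. For the second claim, `e_k A = K e_k²`.
-/

/-- `j ∈ D¹(i)`: `j` is a first-generation descendent of `i`, i.e. the structure
constant `ω_{ji}` is non-zero. -/
def stepRel {K A : Type*} [Field K] [NonUnitalNonAssocCommRing A] [Module K A]
    [SMulCommClass K A A] [IsScalarTower K A A] {ι : Type*} (e : Module.Basis ι K A)
    (i j : ι) : Prop :=
  e.repr (e i * e i) j ≠ 0

/-- The ideal of `A` generated by the element `x`. -/
def idealGen (K : Type*) {A : Type*} [Field K] [NonUnitalNonAssocCommRing A] [Module K A]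
    [SMulCommClass K A A] [IsScalarTower K A A] (x : A) : Submodule K A :=
  sInf {N : Submodule K A | x ∈ N ∧ ∀ y ∈ N, ∀ a : A, y * a ∈ N}

section EvolutionAlgebra

variable {K A : Type*} [Field K] [NonUnitalNonAssocCommRing A] [Module K A]
    [IsScalarTower K A A] {ι : Type*} {e : Module.Basis ι K A}

lemma span_mul_mem_span {S : Set A} (hS : ∀ y ∈ S, ∀ a : A, y * a ∈ Submodule.span K S)
    (y : A) (hy : y ∈ Submodule.span K S) (a : A) : y * a ∈ Submodule.span K S := by
  induction hy using Submodule.span_induction with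
  | mem z hz => exact hS z hz a
  | zero => simp
  | add y z _ _ hy hz => simpa only [add_mul] using Submodule.add_mem _ hy hz
  | smul c y _ hy => simpa only [smul_mul_assoc] using Submodule.smul_mem _ c hy

lemma mul_basis_eq_smul_sq (hnat : ∀ i j, i ≠ j → e i * e j = 0) (x : A) (i : ι) :
    x * e i = e.repr x i • (e i * e i) := by
  have h : LinearMap.mulRight K (e i) = (e.coord i).smulRight (e i * e i) := by
    refine e.ext fun j => ?_
    by_cases hji : j = i
    · subst hji; simp
    · simp [hnat j i hji, hji]
  simpa using LinearMap.congr_fun h x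

variable [SMulCommClass K A A]

lemma mem_idealGen_self (x : A) : x ∈ idealGen K x :=
  Submodule.mem_sInf.2 fun _ hN => hN.1

lemma mul_mem_idealGen {x y : A} (hy : y ∈ idealGen K x) (a : A) : y * a ∈ idealGen K x :=
  Submodule.mem_sInf.2 fun N hN => hN.2 y (Submodule.mem_sInf.1 hy N hN) a

lemma idealGen_le {x : A} {N : Submodule K A} (hx : x ∈ N)
    (hN : ∀ y ∈ N, ∀ a : A, y * a ∈ N) : idealGen K x ≤ N :=
  sInf_le ⟨hx, hN⟩

lemma idealGen_le_of_mem {x y : A} (hy : y ∈ idealGen K x) : idealGen K y ≤ idealGen K x :=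
  idealGen_le hy fun _ hz => mul_mem_idealGen hz

lemma idealGen_eq_span_singleton_sup {x : A} (hx : ∀ a : A, x * a ∈ idealGen K (x * x)) :
    idealGen K x = Submodule.span K {x} ⊔ idealGen K (x * x) := by
  apply le_antisymm
  · refine idealGen_le (Submodule.mem_sup_left (Submodule.mem_span_singleton_self x)) ?_
    intro y hy a
    obtain ⟨u, hu, v, hv, rfl⟩ := Submodule.mem_sup.1 hy
    obtain ⟨c, rfl⟩ := Submodule.mem_span_singleton.1 hu
    rw [add_mul, smul_mul_assoc]
    exact Submodule.mem_sup_right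
      (Submodule.add_mem _ (Submodule.smul_mem _ c (hx a)) (mul_mem_idealGen hv a))
  · refine sup_le ?_ (idealGen_le_of_mem (mul_mem_idealGen (mem_idealGen_self x) x))
    exact (Submodule.span_singleton_le_iff_mem _ _).2 (mem_idealGen_self x)

lemma mul_mem_of_sq_mem (hnat : ∀ i j, i ≠ j → e i * e j = 0) {N : Submodule K A} {x : A}
    (hx : ∀ j, e.repr x j ≠ 0 → e j * e j ∈ N) (a : A) : x * a ∈ N := by
  induction e.mem_span a using Submodule.span_induction with
  | mem _ hb =>
    obtain ⟨j, rfl⟩ := hb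
    rw [mul_basis_eq_smul_sq hnat x j]
    by_cases hxj : e.repr x j = 0
    · simp [hxj]
    · exact Submodule.smul_mem _ _ (hx j hxj)
  | zero => simp
  | add b c _ _ hb hc => simpa only [mul_add] using Submodule.add_mem _ hb hc
  | smul c b _ hb => simpa only [mul_smul_comm] using Submodule.smul_mem _ c hb

lemma sq_mem_of_stepRel (hnat : ∀ i j, i ≠ j → e i * e j = 0) {N : Submodule K A}
    (hN : ∀ y ∈ N, ∀ a : A, y * a ∈ N) {i j : ι} (hj : e j * e j ∈ N) (hji : stepRel e j i) :
    e i * e i ∈ N := by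
  have h := N.smul_mem (e.repr (e j * e j) i)⁻¹ (hN _ hj (e i))
  rwa [mul_basis_eq_smul_sq hnat (e j * e j) i, smul_smul, inv_mul_cancel₀ hji, one_smul] at h

lemma sq_mem_of_transGen (hnat : ∀ i j, i ≠ j → e i * e j = 0) {N : Submodule K A}
    (hN : ∀ y ∈ N, ∀ a : A, y * a ∈ N) {i j : ι} (hj : e j * e j ∈ N)
    (hji : Relation.TransGen (stepRel e) j i) : e i * e i ∈ N := by
  induction hji with
  | single h => exact sq_mem_of_stepRel hnat hN hj h
  | tail _ h ih => exact sq_mem_of_stepRel hnat hN ih h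

lemma idealGen_sq_eq_span (hnat : ∀ i j, i ≠ j → e i * e j = 0) (k : ι) :
    idealGen K (e k * e k) =
      Submodule.span K
        {y : A | ∃ j : ι, (j = k ∨ Relation.TransGen (stepRel e) k j) ∧ y = e j * e j} := by
  apply le_antisymm
  · refine idealGen_le (Submodule.subset_span ⟨k, Or.inl rfl, rfl⟩) (span_mul_mem_span ?_)
    rintro _ ⟨j, hkj, rfl⟩
    refine mul_mem_of_sq_mem hnat fun i hji => Submodule.subset_span ⟨i, Or.inr ?_, rfl⟩
    rcases hkj with rfl | hkj
    · exact .single hji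
    · exact hkj.tail hji
  · rw [Submodule.span_le]
    rintro _ ⟨j, rfl | hkj, rfl⟩
    · exact mem_idealGen_self _
    · exact sq_mem_of_transGen hnat (fun _ hy => mul_mem_idealGen hy) (mem_idealGen_self _) hkj

lemma basis_mul_mem_idealGen_sq (hnat : ∀ i j, i ≠ j → e i * e j = 0) (k : ι) (a : A) :
    e k * a ∈ idealGen K (e k * e k) := by
  rw [mul_comm (e k) a, mul_basis_eq_smul_sq hnat a k]
  exact (idealGen K (e k * e k)).smul_mem _ (mem_idealGen_self _)

end EvolutionAlgebra

/-- The ideal generated by `e_k²` is the span of the squares `e_j²` for `j` a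
descendent of `k` or `j = k`; the ideal generated by `e_k` is `K e_k + ⟨e_k²⟩`. -/
theorem ideal_generated_by_basis_element {K A : Type*} [Field K]
    [NonUnitalNonAssocCommRing A] [Module K A] [SMulCommClass K A A] [IsScalarTower K A A]
    {ι : Type*} (e : Module.Basis ι K A) (hnat : ∀ i j, i ≠ j → e i * e j = 0) (k : ι) :
    idealGen K (e k * e k) =
      Submodule.span K
        {y : A | ∃ j : ι, (j = k ∨ Relation.TransGen (stepRel e) k j) ∧ y = e j * e j} ∧
    idealGen K (e k) = Submodule.span K {e k} ⊔ idealGen K (e k * e k) :=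
  ⟨idealGen_sq_eq_span hnat k,
    idealGen_eq_span_singleton_sup (basis_mul_mem_idealGen_sq hnat k)⟩
end
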